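/- arXiv:1507.02403 — 2 statements merged into one kernel-verified Lean document; each statement's English description precedes it below -/
import Mathlib

section
/- Assume conditions (i)–(iv) hold with the same ε ∈ (0,1]. Let V_n = L_n − L_n^0 = n^{−1} Σ_{i=k_n+1}^{n−m_n} (c_{i,n} − c^0_{i,n}) X_{i:n} and z_n = n^{ε/(2(2+ε))}. Then for every sequence a_n → 0 with a_n ≥ 1/log(1+n) and δ_n = a_n^{−1/2}/z_n, P(√n |V_n|/σ > δ_n) = o(1 − Φ(a_n z_n)) as n → ∞; equivalently, P(√n |V_n|/σ > δ_n) = (1 − Φ(x)) o(1) uniformly in the range −A ≤ x ≤ a_n z_n for each A > 0. -/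
/-!
Choose `K` so that `P(X₁ < -K) < α/2` and `P(X₁ > K) < β/2`. By Hoeffding's inequality, except on
an event of probability `O(exp(-γ n))`, fewer than `k_n` of `X₁, …, X_n` lie below `-K` and fewer
than `m_n` lie above `K`, so every order statistic entering `V_n` lies in `[-K, K]`. There Hölder's
inequality and condition (iv) give `√n |V_n| ≤ K C^{1/(2+ε)} / z_n`, which is eventually at most
`σ δ_n = σ a_n^{-1/2} / z_n` because `a_n → 0`. Finally the Gaussian tail satisfies
`1 - Φ(a_n z_n) ≥ exp(-2 z_n²) / √(2π)`, and `z_n² = n^{ε/(2+ε)} = o(n)`.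
-/

open MeasureTheory ProbabilityTheory Filter Set
open scoped ProbabilityTheory

noncomputable section

/-- Left-continuous inverse `F⁻¹(u) = inf {x : F x ≥ u}`. -/
def leftInv (F : ℝ → ℝ) (u : ℝ) : ℝ := sInf {x | u ≤ F x}

/-- `i`-th order statistic (1-based) of the first `n` values of `x`. -/
def orderStat (n i : ℕ) (x : ℕ → ℝ) : ℝ :=
  ((List.ofFn fun j : Fin n => x (j + 1)).mergeSort (fun a b => a ≤ b)).getD (i - 1) 0

/-- Standard normal distribution function. -/
def Phi (x : ℝ) : ℝ := ((gaussianReal 0 1) (Iic x)).toReal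

namespace List.Pairwise

variable {α : Type*} {r : α → α → Prop} {p : α → Bool} {l : List α}

theorem succ_le_countP (hl : l.Pairwise r) (hp : ∀ a b, r a b → p b → p a)
    {i : ℕ} (hi : i < l.length) (h : p l[i]) : i + 1 ≤ l.countP p := by
  have hprefix : ∀ a ∈ l.take (i + 1), p a := by
    intro a ha
    obtain ⟨j, hj, rfl⟩ := List.getElem_of_mem ha
    rw [List.length_take] at hj
    rw [List.getElem_take]
    rcases (show j ≤ i by omega).lt_or_eq with hji | rfl
    · exact hp _ _ (List.pairwise_iff_getElem.mp hl j i _ hi hji) h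
    · exact h
  calc i + 1 = (l.take (i + 1)).countP p := by
        rw [List.countP_eq_length.mpr hprefix, List.length_take]; omega
    _ ≤ l.countP p := (List.take_sublist _ _).countP_le

theorem length_sub_le_countP (hl : l.Pairwise r) (hp : ∀ a b, r a b → p a → p b)
    {i : ℕ} (hi : i < l.length) (h : p l[i]) : l.length - i ≤ l.countP p := by
  have hrev := (List.pairwise_reverse.mpr hl).succ_le_countP (p := p) (fun a b hab => hp b a hab)
    (i := l.length - 1 - i) (by simp; omega)
    (by rw [List.getElem_reverse]; convert h using 2; congr 1; omega)
  rw [List.countP_reverse] at hrev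
  omega

end List.Pairwise

section OrderStatistics

open Finset

variable {n i : ℕ} {x : ℕ → ℝ} {y : ℝ}

def sortedSample (n : ℕ) (x : ℕ → ℝ) : List ℝ :=
  (List.ofFn fun j : Fin n => x (j + 1)).mergeSort (fun a b => a ≤ b)

theorem pairwise_sortedSample : (sortedSample n x).Pairwise (· ≤ ·) :=
  List.pairwise_mergeSort' _ _

@[simp]
theorem length_sortedSample : (sortedSample n x).length = n := by
  simp [sortedSample]

theorem countP_sortedSample (q : ℝ → Prop) [DecidablePred q] :
    (sortedSample n x).countP (fun a => decide (q a)) = #{j ∈ Finset.Icc 1 n | q (x j)} := by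
  have hfin : (List.ofFn fun j : Fin n => x (j + 1)).countP (fun a => decide (q a)) =
      #{j : Fin n | q (x (j + 1))} := by
    rw [List.ofFn_eq_map, List.countP_map, List.countP_eq_length_filter]
    rfl
  rw [sortedSample, (List.mergeSort_perm _ _).countP_eq, hfin, card_filter, card_filter,
    Fin.sum_univ_eq_sum_range (fun j => if q (x (j + 1)) then 1 else 0), range_eq_Ico,
    sum_Ico_add' (fun j => if q (x j) then 1 else 0)]
  rfl

theorem orderStat_eq_getElem (hi : i ∈ Finset.Icc 1 n) :
    orderStat n i x = (sortedSample n x)[i - 1]'(by rw [Finset.mem_Icc] at hi; simp; omega) :=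
  List.getD_eq_getElem _ _ _

theorem le_card_lt_of_orderStat_lt (hi : i ∈ Finset.Icc 1 n) (h : orderStat n i x < y) :
    i ≤ #{j ∈ Finset.Icc 1 n | x j < y} := by
  rw [orderStat_eq_getElem hi] at h
  have := pairwise_sortedSample.succ_le_countP (p := fun a => decide (a < y))
    (fun a b hab hb => by simpa using lt_of_le_of_lt hab (by simpa using hb)) _ (by simpa using h)
  rw [countP_sortedSample] at this
  rw [Finset.mem_Icc] at hi; omega

theorem le_card_gt_of_lt_orderStat (hi : i ∈ Finset.Icc 1 n) (h : y < orderStat n i x) :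
    n + 1 - i ≤ #{j ∈ Finset.Icc 1 n | y < x j} := by
  rw [orderStat_eq_getElem hi] at h
  have := pairwise_sortedSample.length_sub_le_countP (p := fun a => decide (y < a))
    (fun a b hab ha => by simpa using lt_of_lt_of_le (by simpa using ha) hab) _ (by simpa using h)
  rw [countP_sortedSample, length_sortedSample] at this
  rw [Finset.mem_Icc] at hi; omega

theorem abs_orderStat_le {k m : ℕ} {K : ℝ} (hk : #{j ∈ Finset.Icc 1 n | x j < -K} ≤ k)
    (hm : #{j ∈ Finset.Icc 1 n | K < x j} ≤ m) (hi : i ∈ Finset.Ioc k (n - m)) :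
    |orderStat n i x| ≤ K := by
  rw [Finset.mem_Ioc] at hi
  have hi' : i ∈ Finset.Icc 1 n := Finset.mem_Icc.mpr (by omega)
  refine abs_le.mpr ⟨not_lt.mp fun h => ?_, not_lt.mp fun h => ?_⟩
  · have := le_card_lt_of_orderStat_lt hi' h; omega
  · have := le_card_gt_of_lt_orderStat hi' h; omega

end OrderStatistics

section Hoeffding

open Finset

theorem measureReal_card_filter_mem_ge_le {Ω ι : Type*} [MeasurableSpace Ω] {μ : Measure Ω}
    [IsProbabilityMeasure μ] {X : ι → Ω → ℝ} (hmeas : ∀ i, Measurable (X i))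
    (hindep : iIndepFun X μ) {A : Set ℝ} (hA : MeasurableSet A) [DecidablePred (· ∈ A)]
    {s : Finset ι} {p c : ℝ} (hp : ∀ i ∈ s, μ.real (X i ⁻¹' A) = p) (hpc : p ≤ c) :
    μ.real {ω | c * #s ≤ #{i ∈ s | X i ω ∈ A}} ≤ Real.exp (-2 * (c - p) ^ 2 * #s) := by
  set Z : ι → Ω → ℝ := fun i ω => A.indicator 1 (X i ω)
  have hsubG : ∀ i ∈ s, HasSubgaussianMGF (fun ω => Z i ω - p) ((‖(1 : ℝ) - 0‖₊ / 2) ^ 2) μ := by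
    intro i hi
    have hmean : μ[Z i] = p := by
      rw [← hp i hi, ← integral_indicator_one ((hmeas i) hA)]
      rfl
    rw [← hmean]
    exact hasSubgaussianMGF_of_mem_Icc ((measurable_const.indicator hA).comp (hmeas i)).aemeasurable
      (ae_of_all _ fun ω => by by_cases h : X i ω ∈ A <;> simp [Z, h])
  have hindepY : iIndepFun (fun i ω => Z i ω - p) μ :=
    hindep.comp (fun _ x => A.indicator 1 x - p) fun _ =>
      (measurable_const.indicator hA).sub_const _
  have hsum : ∀ ω, ∑ i ∈ s, (Z i ω - p) = #{i ∈ s | X i ω ∈ A} - p * #s := fun ω => by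
    rw [sum_sub_distrib, sum_const, natCast_card_filter, nsmul_eq_mul, mul_comm]
    simp [Z, Set.indicator_apply]
  have hevent : {ω | c * #s ≤ #{i ∈ s | X i ω ∈ A}} ⊆
      {ω | (c - p) * #s ≤ ∑ i ∈ s, (Z i ω - p)} := fun ω hω => by
    simp only [Set.mem_ofPred_eq, hsum] at hω ⊢
    linarith
  refine (measureReal_mono hevent).trans ((HasSubgaussianMGF.measure_sum_ge_le_of_iIndepFun
    hindepY hsubG (mul_nonneg (sub_nonneg.mpr hpc) (Nat.cast_nonneg _))).trans (le_of_eq ?_))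
  rcases Nat.eq_zero_or_pos #s with hs | hs
  · simp [hs]
  · congr 1
    simp only [sum_const, nsmul_eq_mul]
    push_cast
    field_simp
    norm_num

end Hoeffding

section MiddleOrderStatistics

open Real
open scoped Finset

theorem eventually_measureReal_Iio_neg_lt_and_Ioi_lt (μ : Measure ℝ) [IsProbabilityMeasure μ]
    {r : ℝ} (hr : 0 < r) : ∀ᶠ K in atTop, μ.real (Iio (-K)) < r ∧ μ.real (Ioi K) < r := by
  have hlow : Tendsto (fun K => cdf μ (-K)) atTop (nhds 0) :=
    (tendsto_cdf_atBot μ).comp tendsto_neg_atTop_atBot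
  have hupp : Tendsto (fun K => 1 - cdf μ K) atTop (nhds 0) := by
    simpa using (tendsto_cdf_atTop μ).const_sub 1
  filter_upwards [hlow.eventually (gt_mem_nhds hr), hupp.eventually (gt_mem_nhds hr)] with K h₁ h₂
  rw [cdf_eq_real] at h₁ h₂
  refine ⟨(measureReal_mono Iio_subset_Iic_self).trans_lt h₁, ?_⟩
  rwa [← compl_Iic, probReal_compl_eq_one_sub measurableSet_Iic]

theorem exists_measureReal_abs_middle_orderStat_gt_le {Ω : Type*} [MeasurableSpace Ω]
    {μ : Measure Ω} [IsProbabilityMeasure μ] {X : ℕ → Ω → ℝ} (hmeas : ∀ i, Measurable (X i))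
    (hindep : iIndepFun X μ) (hident : ∀ i, μ.map (X i) = μ.map (X 1)) {α β : ℝ} (hα : 0 < α)
    (hβ : 0 < β) {k m : ℕ → ℕ} (hk : ∀ᶠ n in atTop, α * n ≤ k n)
    (hm : ∀ᶠ n in atTop, β * n ≤ m n) :
    ∃ K, 0 ≤ K ∧ ∃ γ > 0, ∀ᶠ n in atTop,
      μ.real {ω | ∃ i ∈ Finset.Ioc (k n) (n - m n), K < |orderStat n i fun j => X j ω|} ≤
        2 * exp (-γ * n) := by
  have := Measure.isProbabilityMeasure_map (μ := μ) (hmeas 1).aemeasurable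
  obtain ⟨K, hK, hlow, hupp⟩ := ((eventually_ge_atTop 0).and
    (eventually_measureReal_Iio_neg_lt_and_Ioi_lt (μ.map (X 1)) (lt_min hα hβ))).exists
  have hlaw : ∀ {A : Set ℝ}, MeasurableSet A → ∀ i, μ.real (X i ⁻¹' A) = (μ.map (X 1)).real A :=
    fun hA i => by rw [← hident i, map_measureReal_apply (hmeas i) hA]
  set p₁ := (μ.map (X 1)).real (Iio (-K))
  set p₂ := (μ.map (X 1)).real (Ioi K)
  have hp₁ : p₁ < α := hlow.trans_le (min_le_left _ _)
  have hp₂ : p₂ < β := hupp.trans_le (min_le_right _ _)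
  refine ⟨K, hK, 2 * min ((α - p₁) ^ 2) ((β - p₂) ^ 2), by positivity, ?_⟩
  filter_upwards [hk, hm] with n hkn hmn
  have hsub : {ω | ∃ i ∈ Finset.Ioc (k n) (n - m n), K < |orderStat n i fun j => X j ω|} ⊆
      {ω | α * #(Finset.Icc 1 n) ≤ #{j ∈ Finset.Icc 1 n | X j ω ∈ Iio (-K)}} ∪
      {ω | β * #(Finset.Icc 1 n) ≤ #{j ∈ Finset.Icc 1 n | X j ω ∈ Ioi K}} := by
    rintro ω ⟨i, hi, hKi⟩
    by_contra hω
    simp only [Set.mem_union, Set.mem_ofPred_eq, not_or, not_le, Nat.card_Icc,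
      add_tsub_cancel_right, Set.mem_Iio, Set.mem_Ioi] at hω
    refine hKi.not_ge (abs_orderStat_le ?_ ?_ hi)
    · exact_mod_cast (hω.1.trans_le hkn).le
    · exact_mod_cast (hω.2.trans_le hmn).le
  have hexp : ∀ {d : ℝ}, min ((α - p₁) ^ 2) ((β - p₂) ^ 2) ≤ d →
      exp (-2 * d * #(Finset.Icc 1 n)) ≤ exp (-(2 * min ((α - p₁) ^ 2) ((β - p₂) ^ 2)) * n) :=
    fun h => exp_le_exp.mpr <| by
      rw [Nat.card_Icc, add_tsub_cancel_right]
      nlinarith [n.cast_nonneg (α := ℝ)]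
  calc _ ≤ _ := (measureReal_mono hsub).trans (measureReal_union_le _ _)
    _ ≤ exp (-2 * (α - p₁) ^ 2 * #(Finset.Icc 1 n)) + exp (-2 * (β - p₂) ^ 2 * #(Finset.Icc 1 n)) :=
        add_le_add
          (measureReal_card_filter_mem_ge_le hmeas hindep measurableSet_Iio
            (fun i _ => hlaw measurableSet_Iio i) hp₁.le)
          (measureReal_card_filter_mem_ge_le hmeas hindep measurableSet_Ioi
            (fun i _ => hlaw measurableSet_Ioi i) hp₂.le)
    _ ≤ _ := by linarith [hexp (min_le_left _ _), hexp (min_le_right _ _)]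

end MiddleOrderStatistics

section WeightedSums

open Real
open scoped Finset

theorem abs_sum_mul_le_of_abs_le {ι : Type*} (s : Finset ι) {w y : ι → ℝ} {K p : ℝ} (hp : 1 ≤ p)
    (hK : 0 ≤ K) (hy : ∀ i ∈ s, |y i| ≤ K) :
    |∑ i ∈ s, w i * y i| ≤ K * ((#s : ℝ) ^ (1 - p⁻¹) * (∑ i ∈ s, |w i| ^ p) ^ p⁻¹) := by
  have hHolder := inner_le_weight_mul_Lp_of_nonneg s hp (fun _ => 1) (fun i => |w i|)
    (fun _ => zero_le_one) (fun i => abs_nonneg _)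
  simp only [one_mul, Finset.sum_const, nsmul_eq_mul, mul_one] at hHolder
  calc |∑ i ∈ s, w i * y i| ≤ ∑ i ∈ s, |w i| * K :=
        (Finset.abs_sum_le_sum_abs _ _).trans <| Finset.sum_le_sum fun i hi => by
          rw [abs_mul]; exact mul_le_mul_of_nonneg_left (hy i hi) (abs_nonneg _)
    _ = K * ∑ i ∈ s, |w i| := by rw [← Finset.sum_mul, mul_comm]
    _ ≤ _ := mul_le_mul_of_nonneg_left hHolder hK

theorem sqrt_mul_abs_inv_mul_sum_le {n : ℕ} (hn : 0 < n) {s : Finset ℕ} (hs : #s ≤ n)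
    {w y : ℕ → ℝ} {K C ε : ℝ} (hε : -1 ≤ ε) (hK : 0 ≤ K) (hy : ∀ i ∈ s, |y i| ≤ K)
    (hw : ∑ i ∈ s, |w i| ^ (2 + ε) ≤ C * (n : ℝ) ^ (-ε)) :
    √n * |(n : ℝ)⁻¹ * ∑ i ∈ s, w i * y i| ≤
      K * C ^ (2 + ε)⁻¹ / (n : ℝ) ^ (ε / (2 * (2 + ε))) := by
  have hn' : (0 : ℝ) < n := Nat.cast_pos.mpr hn
  have hp : (2 + ε)⁻¹ ≤ 1 := inv_le_one_of_one_le₀ (by linarith)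
  have hsum : 0 ≤ ∑ i ∈ s, |w i| ^ (2 + ε) := Finset.sum_nonneg fun i _ => by positivity
  have hC : 0 ≤ C := nonneg_of_mul_nonneg_left (hsum.trans hw) (rpow_pos_of_pos hn' _)
  have hpow : √n * (n : ℝ)⁻¹ * ((n : ℝ) ^ (1 - (2 + ε)⁻¹) * (C * (n : ℝ) ^ (-ε)) ^ (2 + ε)⁻¹) =
      C ^ (2 + ε)⁻¹ / (n : ℝ) ^ (ε / (2 * (2 + ε))) := by
    rw [mul_rpow hC (rpow_nonneg hn'.le _), ← rpow_mul hn'.le, div_eq_mul_inv, ← rpow_neg hn'.le,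
      sqrt_eq_rpow, ← rpow_neg_one]
    calc _ = C ^ (2 + ε)⁻¹ * ((n : ℝ) ^ (1 / 2 : ℝ) * (n : ℝ) ^ (-1 : ℝ) *
          (n : ℝ) ^ (1 - (2 + ε)⁻¹) * (n : ℝ) ^ (-ε * (2 + ε)⁻¹)) := by ring
      _ = _ := by
        rw [← rpow_add hn', ← rpow_add hn', ← rpow_add hn']
        have h2ε : 2 + ε ≠ 0 := by linarith
        congr 2
        field_simp
        ring
  calc √n * |(n : ℝ)⁻¹ * ∑ i ∈ s, w i * y i|
      = √n * (n : ℝ)⁻¹ * |∑ i ∈ s, w i * y i| := by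
        rw [abs_mul, abs_inv, Nat.abs_cast, mul_assoc]
    _ ≤ √n * (n : ℝ)⁻¹ *
          (K * ((#s : ℝ) ^ (1 - (2 + ε)⁻¹) * (∑ i ∈ s, |w i| ^ (2 + ε)) ^ (2 + ε)⁻¹)) := by
        gcongr
        exact abs_sum_mul_le_of_abs_le s (by linarith) hK hy
    _ ≤ √n * (n : ℝ)⁻¹ * (K * ((n : ℝ) ^ (1 - (2 + ε)⁻¹) * (C * (n : ℝ) ^ (-ε)) ^ (2 + ε)⁻¹)) := by
        gcongr
        exact inv_nonneg.mpr (by linarith)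
    _ = _ := by rw [mul_left_comm, hpow, mul_div_assoc]

end WeightedSums

theorem tendsto_mul_sub_rpow_atTop {γ r : ℝ} (hγ : 0 < γ) (hr : r < 1) (C : ℝ) :
    Tendsto (fun n : ℕ => γ * n - C * (n : ℝ) ^ r) atTop atTop := by
  have hsmall : Tendsto (fun n : ℕ => γ - C * (n : ℝ) ^ (r - 1)) atTop (nhds (γ - C * 0)) :=
    tendsto_const_nhds.sub (((tendsto_rpow_neg_atTop (by linarith : 0 < 1 - r)).comp
      tendsto_natCast_atTop_atTop).const_mul C |>.congr fun n => by simp [neg_sub])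
  rw [mul_zero, sub_zero] at hsmall
  refine (tendsto_natCast_atTop_atTop.atTop_mul_pos hγ hsmall).congr' ?_
  filter_upwards [eventually_gt_atTop 0] with n hn
  rw [mul_sub, Real.rpow_sub_one (by positivity)]
  field_simp

section GaussianTail

open Real

theorem one_sub_Phi_eq (x : ℝ) : 1 - Phi x = (gaussianReal 0 1).real (Ioi x) := by
  rw [← compl_Iic, probReal_compl_eq_one_sub measurableSet_Iic, Phi, measureReal_def]

theorem exp_neg_sq_div_le_one_sub_Phi {x : ℝ} (hx : -1 / 2 ≤ x) :
    exp (-(x + 1) ^ 2 / 2) / √(2 * π) ≤ 1 - Phi x := by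
  have hint : IntegrableOn (gaussianPDFReal 0 1) (Ioi x) :=
    (integrable_gaussianPDFReal 0 1).restrict
  have hpdf : ∀ y ∈ Ioc x (x + 1), exp (-(x + 1) ^ 2 / 2) / √(2 * π) ≤ gaussianPDFReal 0 1 y := by
    intro y ⟨hxy, hyx⟩
    rw [gaussianPDFReal, div_eq_inv_mul]
    simp only [NNReal.coe_one, mul_one, sub_zero]
    have hy : y ^ 2 ≤ (x + 1) ^ 2 := by nlinarith
    gcongr ?_ * exp (?_ / 2)
    linarith
  calc exp (-(x + 1) ^ 2 / 2) / √(2 * π)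
      = ∫ _ in Ioc x (x + 1), exp (-(x + 1) ^ 2 / 2) / √(2 * π) := by
        rw [setIntegral_const, volume_real_Ioc_of_le (by linarith), add_sub_cancel_left, one_smul]
    _ ≤ ∫ y in Ioc x (x + 1), gaussianPDFReal 0 1 y :=
        setIntegral_mono_on (integrableOn_const measure_Ioc_lt_top.ne)
          (hint.mono_set Ioc_subset_Ioi_self) measurableSet_Ioc hpdf
    _ ≤ ∫ y in Ioi x, gaussianPDFReal 0 1 y :=
        setIntegral_mono_set hint (ae_of_all _ fun y => gaussianPDFReal_nonneg _ _ _)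
          Ioc_subset_Ioi_self.eventuallyLE
    _ = 1 - Phi x := by
        rw [one_sub_Phi_eq, measureReal_def, gaussianReal_apply_eq_integral _ one_ne_zero,
          ENNReal.toReal_ofReal (setIntegral_nonneg measurableSet_Ioi
            fun y _ => gaussianPDFReal_nonneg _ _ _)]

theorem exp_neg_mul_isLittleO_one_sub_Phi {γ q : ℝ} (hγ : 0 < γ) (hq0 : 0 ≤ q) (hq : q < 1 / 2)
    {t : ℕ → ℝ} (ht : ∀ᶠ n in atTop, 0 ≤ t n ∧ t n ≤ (n : ℝ) ^ q) :
    (fun n : ℕ => exp (-γ * n)) =o[atTop] fun n => 1 - Phi (t n) := by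
  have hexp : (fun n : ℕ => exp (-γ * n)) =o[atTop] fun n => exp (-2 * (n : ℝ) ^ (2 * q)) :=
    isLittleO_exp_comp_exp_comp.mpr <|
      (tendsto_mul_sub_rpow_atTop (r := 2 * q) hγ (by linarith) 2).congr fun n => by ring
  refine hexp.trans_isBigO (Asymptotics.IsBigO.of_bound √(2 * π) ?_)
  filter_upwards [ht, eventually_ge_atTop 1] with n ⟨ht0, htn⟩ hn
  have hnq : 1 ≤ (n : ℝ) ^ q := Real.one_le_rpow (by exact_mod_cast hn) hq0
  have hsq : (t n + 1) ^ 2 / 2 ≤ 2 * (n : ℝ) ^ (2 * q) := by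
    rw [mul_comm 2 q, Real.rpow_mul (Nat.cast_nonneg n), Real.rpow_two]
    nlinarith
  have htail := exp_neg_sq_div_le_one_sub_Phi (x := t n) (by linarith)
  rw [Real.norm_of_nonneg (exp_pos _).le, Real.norm_of_nonneg ((div_nonneg (exp_pos _).le
    (sqrt_nonneg _)).trans htail), ← div_le_iff₀' (by positivity)]
  exact le_trans (div_le_div_of_nonneg_right (exp_le_exp.mpr (by linarith)) (sqrt_nonneg _)) htail

end GaussianTail

theorem eventually_mul_le_of_tendsto_div {k : ℕ → ℕ} {α c : ℝ}
    (hk : Tendsto (fun n => (k n : ℝ) / n) atTop (nhds α)) (hc : c < α) :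
    ∀ᶠ n in atTop, c * n ≤ k n := by
  filter_upwards [hk.eventually (lt_mem_nhds hc), eventually_gt_atTop 0] with n h hn
  exact ((lt_div_iff₀ (Nat.cast_pos.mpr hn)).mp h).le

theorem tendsto_rpow_atTop_of_tendsto_zero {ι : Type*} {l : Filter ι} {a : ι → ℝ}
    (ha : Tendsto a l (nhds 0)) (hpos : ∀ᶠ i in l, 0 < a i) {y : ℝ} (hy : y < 0) :
    Tendsto (fun i => a i ^ y) l atTop :=
  (tendsto_rpow_neg_nhdsGT_zero hy).comp (tendsto_nhdsWithin_iff.mpr ⟨ha, hpos⟩)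

theorem Vn_negligible_general
    {Ω : Type*} [MeasureSpace Ω] [IsProbabilityMeasure (ℙ : Measure Ω)]
    -- i.i.d. random variables with distribution function F
    (X : ℕ → Ω → ℝ) (hmeas : ∀ i, Measurable (X i))
    (hindep : iIndepFun X ℙ)
    (hident : ∀ i, Measure.map (X i) ℙ = Measure.map (X 1) ℙ)
    -- trimming proportions
    (α β : ℝ) (hα : 0 < α) (hβ : 1 - β < 1)
    (k m : ℕ → ℕ)
    (αn βn : ℕ → ℝ) (hαn : ∀ n, αn n = (k n : ℝ) / n) (hβn : ∀ n, βn n = (m n : ℝ) / n)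
    (hαlim : Tendsto αn atTop (nhds α)) (hβlim : Tendsto βn atTop (nhds β))
    (ε : ℝ) (hε : ε ∈ Ioc (0 : ℝ) 1)
    -- condition (iv)
    (c c0 : ℕ → ℕ → ℝ)
    (hweights : (fun n : ℕ => ∑ i ∈ Finset.Ioc (k n) (n - m n), |c n i - c0 n i| ^ (2 + ε))
      =O[atTop] fun n : ℕ => (n : ℝ) ^ (-ε))
    -- V_n = L_n - L⁰_n
    (V : ℕ → Ω → ℝ)
    (hV : ∀ n ω, V n ω = (n : ℝ)⁻¹ * ∑ i ∈ Finset.Ioc (k n) (n - m n),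
      (c n i - c0 n i) * orderStat n i fun j => X j ω)
    (σ : ℝ) (hσpos : 0 < σ)
    -- the sequences z_n, a_n and δ_n
    (z : ℕ → ℝ) (hz : ∀ n, z n = (n : ℝ) ^ (ε / (2 * (2 + ε))))
    (a : ℕ → ℝ) (ha : Tendsto a atTop (nhds 0))
    (halow : ∀ n, a n ≥ 1 / Real.log (1 + n))
    (δ : ℕ → ℝ) (hδ : ∀ n, δ n = (a n) ^ (-(1 / 2) : ℝ) / z n) :
    (fun n : ℕ => (ℙ {ω | Real.sqrt n * |V n ω| / σ > δ n}).toReal) =o[atTop]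
      fun n : ℕ => 1 - Phi (a n * z n) := by
  have hε0 : 0 < ε := hε.1
  have hβ0 : 0 < β := (sub_lt_self_iff 1).mp hβ
  have hk := eventually_mul_le_of_tendsto_div (hαlim.congr hαn) (half_lt_self hα)
  have hm := eventually_mul_le_of_tendsto_div (hβlim.congr hβn) (half_lt_self hβ0)
  obtain ⟨K, hK, γ, hγ, hbad⟩ := exists_measureReal_abs_middle_orderStat_gt_le hmeas hindep hident
    (half_pos hα) (half_pos hβ0) hk hm
  obtain ⟨CW, hCW⟩ := hweights.bound
  have hapos : ∀ᶠ n : ℕ in atTop, 0 < a n := (eventually_ge_atTop 1).mono fun n hn =>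
    (one_div_pos.mpr (Real.log_pos (by norm_cast; omega))).trans_le (halow n)
  have hlarge : ∀ᶠ n in atTop, K * CW ^ (2 + ε)⁻¹ ≤ σ * a n ^ (-(1 / 2) : ℝ) :=
    ((tendsto_rpow_atTop_of_tendsto_zero ha hapos (by norm_num)).const_mul_atTop
      hσpos).eventually_ge_atTop _
  have hsub : ∀ᶠ n : ℕ in atTop, {ω | Real.sqrt n * |V n ω| / σ > δ n} ⊆
      {ω | ∃ i ∈ Finset.Ioc (k n) (n - m n), K < |orderStat n i fun j => X j ω|} := by
    filter_upwards [hCW, hlarge, eventually_gt_atTop 0] with n hw hl hn ω hω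
    by_contra hgood
    simp only [Set.mem_ofPred_eq, not_exists, not_and, not_lt] at hgood
    rw [Real.norm_of_nonneg (Finset.sum_nonneg fun i _ => by positivity),
      Real.norm_of_nonneg (by positivity)] at hw
    have hV' := sqrt_mul_abs_inv_mul_sum_le hn (by rw [Nat.card_Ioc]; omega) (by linarith)
      hK hgood hw
    rw [← hV] at hV'
    refine (not_lt.mpr ?_) (show δ n < √n * |V n ω| / σ from hω)
    rw [div_le_iff₀ hσpos, hδ, hz, div_mul_eq_mul_div, mul_comm _ σ]
    exact hV'.trans (div_le_div_of_nonneg_right hl (by positivity))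
  have hP : (fun n : ℕ => (ℙ {ω | Real.sqrt n * |V n ω| / σ > δ n}).toReal) =O[atTop]
      fun n : ℕ => Real.exp (-γ * n) := by
    refine Asymptotics.IsBigO.of_bound 2 ?_
    filter_upwards [hsub, hbad] with n hs hb
    rw [Real.norm_of_nonneg ENNReal.toReal_nonneg, Real.norm_of_nonneg (Real.exp_pos _).le]
    exact (measureReal_mono hs).trans hb
  refine hP.trans_isLittleO (exp_neg_mul_isLittleO_one_sub_Phi hγ (q := ε / (2 * (2 + ε)))
    (by positivity) ?_ ?_)
  · rw [div_lt_iff₀ (by positivity)]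
    linarith
  · filter_upwards [hapos, ha.eventually (gt_mem_nhds one_pos)] with n h0 h1
    rw [hz]
    exact ⟨by positivity, mul_le_of_le_one_left (by positivity) h1.le⟩

/-- The term `V_n = L_n - L⁰_n` is negligible at the large-deviation scale:
`P(√n |V_n| / σ > δ_n) = o(1 - Φ(a_n z_n))`. -/
theorem Vn_negligible
    {Ω : Type*} [MeasureSpace Ω] [IsProbabilityMeasure (ℙ : Measure Ω)]
    -- i.i.d. random variables with distribution function F
    (X : ℕ → Ω → ℝ) (hmeas : ∀ i, Measurable (X i))
    (hindep : iIndepFun X ℙ)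
    (hident : ∀ i, Measure.map (X i) ℙ = Measure.map (X 1) ℙ)
    (F : ℝ → ℝ) (hF : ∀ x, F x = (ℙ {ω | X 1 ω ≤ x}).toReal)
    -- trimming proportions
    (α β : ℝ) (hα : 0 < α) (hαβ : α < 1 - β) (hβ : 1 - β < 1)
    (k m : ℕ → ℕ) (hkm : ∀ n, 1 ≤ n → k n < n - m n)
    (αn βn : ℕ → ℝ) (hαn : ∀ n, αn n = (k n : ℝ) / n) (hβn : ∀ n, βn n = (m n : ℝ) / n)
    (hαlim : Tendsto αn atTop (nhds α)) (hβlim : Tendsto βn atTop (nhds β))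
    -- the weight function J on an open set I, [α, 1-β] ⊂ I ⊆ (0,1)
    (J : ℝ → ℝ) (I : Set ℝ) (hI : IsOpen I) (hIsub : Icc α (1 - β) ⊆ I) (hI01 : I ⊆ Ioo 0 1)
    (ε : ℝ) (hε : ε ∈ Ioc (0 : ℝ) 1)
    -- condition (i): J is Lipschitz on I
    (CJ : ℝ) (hCJ : 0 ≤ CJ) (hLip : ∀ u ∈ I, ∀ v ∈ I, |J u - J v| ≤ CJ * |u - v|)
    -- condition (ii): F⁻¹ is ε-Hölder near α and 1-β
    (hHolder : ∃ Uα ∈ nhds α, ∃ Uβ ∈ nhds (1 - β), ∃ CH : ℝ,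
      (∀ u ∈ Uα, ∀ v ∈ Uα, |leftInv F u - leftInv F v| ≤ CH * |u - v| ^ ε) ∧
      (∀ u ∈ Uβ, ∀ v ∈ Uβ, |leftInv F u - leftInv F v| ≤ CH * |u - v| ^ ε))
    -- condition (iii)
    (hrate : (fun n : ℕ => max |αn n - α| |βn n - β|) =O[atTop]
      fun n : ℕ => (n : ℝ) ^ (-(1 / (2 + ε))))
    -- condition (iv)
    (c c0 : ℕ → ℕ → ℝ)
    (hc0 : ∀ n i, c0 n i = n * ∫ u in ((i : ℝ) - 1) / n..(i : ℝ) / n, J u)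
    (hweights : (fun n : ℕ => ∑ i ∈ Finset.Ioc (k n) (n - m n), |c n i - c0 n i| ^ (2 + ε))
      =O[atTop] fun n : ℕ => (n : ℝ) ^ (-ε))
    -- V_n = L_n - L⁰_n
    (V : ℕ → Ω → ℝ)
    (hV : ∀ n ω, V n ω = (n : ℝ)⁻¹ * ∑ i ∈ Finset.Ioc (k n) (n - m n),
      (c n i - c0 n i) * orderStat n i fun j => X j ω)
    (hmono : Monotone (leftInv F))
    (σ : ℝ) (hσpos : 0 < σ)
    (hσ : σ ^ 2 = ∫ p in (Ico α (1 - β)) ×ˢ (Ico α (1 - β)),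
      J p.1 * J p.2 * (min p.1 p.2 - p.1 * p.2)
        ∂(hmono.stieltjesFunction.measure.prod hmono.stieltjesFunction.measure))
    -- the sequences z_n, a_n and δ_n
    (z : ℕ → ℝ) (hz : ∀ n, z n = (n : ℝ) ^ (ε / (2 * (2 + ε))))
    (a : ℕ → ℝ) (ha : Tendsto a atTop (nhds 0))
    (halow : ∀ n, a n ≥ 1 / Real.log (1 + n))
    (δ : ℕ → ℝ) (hδ : ∀ n, δ n = (a n) ^ (-(1 / 2) : ℝ) / z n) :
    (fun n : ℕ => (ℙ {ω | Real.sqrt n * |V n ω| / σ > δ n}).toReal) =o[atTop]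
      fun n : ℕ => 1 - Phi (a n * z n) :=
  Vn_negligible_general X hmeas hindep hident α β hα hβ k m αn βn hαn hβn hαlim hβlim ε hε c c0
    hweights V hV σ hσpos z hz a ha halow δ hδ
end
end

section
/- Let ε ∈ (0,1], α ∈ (0,1), k = ⌊nα⌋, z_n = n^{ε/(2(2+ε))}, and let α_n be a sequence with |α_n − α| = O(n^{−1/(2+ε)}). For every constant C > 0 and every sequence a_n → 0 with a_n ≥ 1/log(1+n): P(√n |α_n − α| · |U_{k:n} − α|^{ε} > C a_n^{−1/2} n^{−ε/(2(2+ε))}) = o(1 − Φ(a_n z_n)) as n → ∞; equivalently, this probability is (1 − Φ(x)) o(1) uniformly in the range −A ≤ x ≤ a_n z_n for each A > 0. -/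
/-!
If `|α_n - α| ≤ K n^{-1/(2+ε)}` and `a_n ≤ 1`, the event forces `|U_{k:n} - α| > s_n`
with `s_n = (C/K)^{1/ε} n^{-1/(2+ε)}`, where `n s_n² = (C/K)^{2/ε} z_n²`. Since
`U_{k:n} ≤ v` iff at least `k` of `U_1, …, U_n` are `≤ v`, Hoeffding's inequality for these
binomial counts bounds the probability of that by `2 exp(-n s_n² / 2) = 2 exp(-δ z_n²)` with
`δ > 0` fixed. On the other side `1 - Φ(x) ≥ φ(x + 1) ≥ c exp(-x²)` for `x ≥ 0`, and
`exp(-δ z_n²) = o(exp(-a_n² z_n²))` because `a_n → 0`.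
-/

open MeasureTheory ProbabilityTheory Filter Set
open scoped ProbabilityTheory

noncomputable section

open Real Asymptotics Topology

-- `n F_n(v)`, for `F_n` the empirical distribution function of `x 1, …, x n`
def empiricalCount (n : ℕ) (x : ℕ → ℝ) (v : ℝ) : ℕ :=
  ∑ i ∈ Finset.range n, if x (i + 1) ≤ v then 1 else 0

theorem List.Pairwise.getElem_le_iff_lt_countP {β : Type*} [LinearOrder β] {l : List β}
    (hl : l.Pairwise (· ≤ ·)) {i : ℕ} (hi : i < l.length) (v : β) :
    l[i] ≤ v ↔ i < l.countP (· ≤ v) := by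
  have hsplit (m : ℕ) :
      l.countP (· ≤ v) = (l.take m).countP (· ≤ v) + (l.drop m).countP (· ≤ v) := by
    rw [← List.countP_append, List.take_append_drop]
  constructor
  · intro h
    have htake : (l.take (i + 1)).countP (· ≤ v) = i + 1 := by
      rw [List.countP_eq_length.mpr, List.length_take_of_le hi]
      intro a ha
      obtain ⟨j, hj, rfl⟩ := List.mem_take_iff_getElem.mp ha
      refine decide_eq_true (le_trans ?_ h)
      rcases Nat.lt_or_eq_of_le (show j ≤ i by omega) with hji | rfl
      · exact List.pairwise_iff_getElem.mp hl j i (by omega) hi hji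
      · exact le_rfl
    rw [hsplit (i + 1), htake]
    omega
  · intro h
    by_contra! hv
    have hdrop : (l.drop i).countP (· ≤ v) = 0 := by
      refine List.countP_eq_zero.mpr fun a ha => ?_
      obtain ⟨j, hj, rfl⟩ := List.mem_drop_iff_getElem.mp ha
      suffices l[i] ≤ l[i + j] by simpa using hv.trans_le this
      rcases Nat.eq_zero_or_pos j with rfl | hj0
      · exact le_rfl
      · exact List.pairwise_iff_getElem.mp hl i (i + j) hi (by omega) (by omega)
    have htake := (l.take i).countP_le_length (p := (· ≤ v))
    rw [hsplit i, hdrop] at h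
    rw [List.length_take] at htake
    omega

theorem countP_ofFn_le_eq_empiricalCount (n : ℕ) (x : ℕ → ℝ) (v : ℝ) :
    (List.ofFn fun j : Fin n => x (j + 1)).countP (· ≤ v) = empiricalCount n x v := by
  induction n with
  | zero => simp [empiricalCount]
  | succ m ih =>
    rw [List.ofFn_succ', empiricalCount, Finset.sum_range_succ, List.concat_eq_append,
      List.countP_append, ← empiricalCount, ← ih]
    simp [List.countP_cons, Fin.val_last]

theorem orderStat_le_iff {n k : ℕ} (hk : 1 ≤ k) (hkn : k ≤ n) (x : ℕ → ℝ) (v : ℝ) :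
    orderStat n k x ≤ v ↔ k ≤ empiricalCount n x v := by
  set l := List.ofFn fun j : Fin n => x (j + 1)
  have hlen : k - 1 < (l.mergeSort (· ≤ ·)).length := by simp [l]; omega
  rw [orderStat, List.getD_eq_getElem _ _ hlen,
    (List.pairwise_mergeSort' (· ≤ ·) l).getElem_le_iff_lt_countP hlen,
    (List.mergeSort_perm l _).countP_eq _, countP_ofFn_le_eq_empiricalCount]
  omega

section Hoeffding

variable {Ω : Type*} {mΩ : MeasurableSpace Ω} {μ : Measure Ω} [IsProbabilityMeasure μ]
  {Y : ℕ → Ω → ℝ} {p : ℝ}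

theorem measureReal_add_le_sum_range_le (hindep : iIndepFun Y μ)
    (hmeas : ∀ i, AEMeasurable (Y i) μ) (hbound : ∀ i, ∀ᵐ ω ∂μ, Y i ω ∈ Icc 0 1)
    (hmean : ∀ i, μ[Y i] = p) (n : ℕ) {d : ℝ} (hd : 0 ≤ d) :
    μ.real {ω | n * p + d ≤ ∑ i ∈ Finset.range n, Y i ω} ≤ exp (-2 * d ^ 2 / n) := by
  have hsubG (i : ℕ) (_ : i < n) :
      HasSubgaussianMGF (fun ω => Y i ω - p) ((‖(1 : ℝ) - 0‖₊ / 2) ^ 2) μ := by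
    simpa only [hmean i] using hasSubgaussianMGF_of_mem_Icc (hmeas i) (hbound i)
  have h := HasSubgaussianMGF.measure_sum_range_ge_le_of_iIndepFun
    (hindep.comp (fun _ x => x - p) fun _ => by fun_prop) hsubG hd
  convert h using 2
  · ext ω
    simp only [mem_ofPred_eq, Function.comp_apply, Finset.sum_sub_distrib, Finset.sum_const,
      Finset.card_range, nsmul_eq_mul]
    constructor <;> intro <;> linarith
  · norm_num
    ring

theorem measureReal_sum_range_le_sub_le (hindep : iIndepFun Y μ)
    (hmeas : ∀ i, AEMeasurable (Y i) μ) (hbound : ∀ i, ∀ᵐ ω ∂μ, Y i ω ∈ Icc 0 1)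
    (hmean : ∀ i, μ[Y i] = p) (n : ℕ) {d : ℝ} (hd : 0 ≤ d) :
    μ.real {ω | ∑ i ∈ Finset.range n, Y i ω ≤ n * p - d} ≤ exp (-2 * d ^ 2 / n) := by
  have h := measureReal_add_le_sum_range_le (Y := fun i ω => 1 - Y i ω) (p := 1 - p)
    (hindep.comp (fun _ x => 1 - x) fun _ => by fun_prop) (fun i => (hmeas i).const_sub 1)
    (fun i => (hbound i).mono fun ω hω => ⟨by linarith [hω.2], by linarith [hω.1]⟩)
    (fun i => by
      rw [integral_sub (integrable_const 1) (Integrable.of_mem_Icc 0 1 (hmeas i) (hbound i)),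
        hmean i, integral_const, probReal_univ, one_smul])
    n hd
  convert h using 2
  ext ω
  simp only [mem_ofPred_eq, Finset.sum_sub_distrib, Finset.sum_const, Finset.card_range,
    nsmul_eq_mul, mul_one]
  constructor <;> intro <;> linarith

end Hoeffding

theorem gaussianPDFReal_add_one_le_one_sub_Phi {x : ℝ} (hx : 0 ≤ x) :
    gaussianPDFReal 0 1 (x + 1) ≤ 1 - Phi x := by
  have hpdf : ∀ y ∈ Ioc x (x + 1), gaussianPDFReal 0 1 (x + 1) ≤ gaussianPDFReal 0 1 y := by
    intro y hy
    simp only [gaussianPDFReal, NNReal.coe_one, sub_zero]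
    gcongr
    · linarith [hy.1]
    · exact hy.2
  calc gaussianPDFReal 0 1 (x + 1) = ∫ _ in Ioc x (x + 1), gaussianPDFReal 0 1 (x + 1) := by simp
    _ ≤ ∫ y in Ioc x (x + 1), gaussianPDFReal 0 1 y :=
        setIntegral_mono_on (integrable_const _) (integrable_gaussianPDFReal 0 1).integrableOn
          measurableSet_Ioc hpdf
    _ = (gaussianReal 0 1).real (Ioc x (x + 1)) := by
        rw [measureReal_def, gaussianReal_apply_eq_integral 0 one_ne_zero, ENNReal.toReal_ofReal
          (setIntegral_nonneg measurableSet_Ioc fun y _ => gaussianPDFReal_nonneg 0 1 y)]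
    _ ≤ (gaussianReal 0 1).real (Ioi x) := measureReal_mono Ioc_subset_Ioi_self
    _ = 1 - Phi x := by rw [← compl_Iic, probReal_compl_eq_one_sub measurableSet_Iic]; rfl

theorem isBigO_exp_neg_sq_one_sub_Phi {ι : Type*} {l : Filter ι} {f : ι → ℝ}
    (hf : ∀ᶠ i in l, 0 ≤ f i) : (fun i => exp (-f i ^ 2)) =O[l] fun i => 1 - Phi (f i) := by
  refine IsBigO.of_bound (√(2 * π) * exp 1) ?_
  filter_upwards [hf] with i hi
  have h := gaussianPDFReal_add_one_le_one_sub_Phi hi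
  rw [norm_of_nonneg (exp_pos _).le, norm_of_nonneg ((gaussianPDFReal_nonneg _ _ _).trans h)]
  refine le_trans ?_ (mul_le_mul_of_nonneg_left h (by positivity))
  have hπ : 0 < √(2 * π) := by positivity
  simp only [gaussianPDFReal, NNReal.coe_one, mul_one, sub_zero]
  rw [mul_mul_mul_comm, mul_inv_cancel₀ hπ.ne', one_mul, ← exp_add]
  gcongr
  nlinarith [sq_nonneg (f i - 1)]

theorem isLittleO_exp_neg_mul_sq {ι : Type*} {l : Filter ι} {δ : ℝ} (hδ : 0 < δ) {a z : ι → ℝ}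
    (ha : Tendsto a l (𝓝 0)) (hz : Tendsto z l atTop) :
    (fun i => exp (-δ * z i ^ 2)) =o[l] fun i => exp (-(a i * z i) ^ 2) := by
  rw [isLittleO_exp_comp_exp_comp]
  have hgap : Tendsto (fun i => δ - a i ^ 2) l (𝓝 δ) := by
    simpa using tendsto_const_nhds.sub (ha.pow 2)
  refine (hgap.pos_mul_atTop hδ ((tendsto_pow_atTop two_ne_zero).comp hz)).congr fun i => ?_
  simp only [Function.comp_apply]
  ring

theorem mul_rpow_neg_inv_two_add_sq {ε x : ℝ} (hε : 0 < ε) (hx : 0 ≤ x) :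
    x * (x ^ (-(1 / (2 + ε)))) ^ 2 = (x ^ (ε / (2 * (2 + ε)))) ^ 2 := by
  rw [← rpow_mul_natCast hx, ← rpow_mul_natCast hx, ← rpow_one_add' hx]
  · congr 1; field_simp; ring
  · push_cast; field_simp; ring_nf; positivity

theorem rpow_inv_mul_rpow_neg_lt_of_lt {ε x K C a b D : ℝ} (hε : 0 < ε) (hx : 0 < x)
    (hK : 0 < K) (hC : 0 < C) (ha : a ∈ Ioc 0 1) (hb : |b| ≤ K * x ^ (-(1 / (2 + ε))))
    (hD : 0 ≤ D)
    (h : C * a ^ (-(1 / 2) : ℝ) * x ^ (-(ε / (2 * (2 + ε)))) < √x * |b| * D ^ ε) :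
    (C / K) ^ ε⁻¹ * x ^ (-(1 / (2 + ε))) < D := by
  set q := ε / (2 * (2 + ε)) with hq
  have hsqrt : √x * x ^ (-(1 / (2 + ε))) = x ^ q := by
    rw [sqrt_eq_rpow, ← rpow_add hx, hq]; congr 1; field_simp; ring
  have hbound : √x * |b| ≤ K * x ^ q := by
    calc √x * |b| ≤ √x * (K * x ^ (-(1 / (2 + ε)))) := by gcongr
      _ = K * x ^ q := by rw [← hsqrt]; ring
  have ha' : 1 ≤ a ^ (-(1 / 2) : ℝ) :=
    one_le_rpow_of_pos_of_le_one_of_nonpos ha.1 ha.2 (by norm_num)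
  have hlow : C / K * x ^ (-(2 * q)) ≤ C * a ^ (-(1 / 2) : ℝ) * x ^ (-q) / (K * x ^ q) := by
    rw [le_div_iff₀ (by positivity), show -(2 * q) = -q + -q by ring, rpow_add hx,
      rpow_neg hx.le]
    field_simp
    nlinarith [rpow_pos_of_pos hx q]
  calc (C / K) ^ ε⁻¹ * x ^ (-(1 / (2 + ε))) = (C / K * x ^ (-(2 * q))) ^ ε⁻¹ := by
        rw [mul_rpow (by positivity) (by positivity), ← rpow_mul hx.le, hq]
        congr 2
        field_simp
    _ ≤ (C * a ^ (-(1 / 2) : ℝ) * x ^ (-q) / (K * x ^ q)) ^ ε⁻¹ := by gcongr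
    _ < D := by
        rw [rpow_inv_lt_iff_of_pos (by positivity) hD hε, div_lt_iff₀ (by positivity)]
        linarith [mul_le_mul_of_nonneg_right hbound (rpow_nonneg hD ε)]

section UniformSample

variable {Ω : Type*} [MeasureSpace Ω] {U : ℕ → Ω → ℝ}

theorem integral_indicator_Iic_of_uniform (hmeas : ∀ i, Measurable (U i))
    (hunif : ∀ i, Measure.map (U i) ℙ = volume.restrict (Ioo (0 : ℝ) 1))
    {v : ℝ} (hv : v ∈ Ioo (0 : ℝ) 1) (i : ℕ) :
    ∫ ω, (Iic v).indicator 1 (U i ω) = v := by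
  have hset : Iic v ∩ Ioo 0 1 = Ioc 0 v := by
    ext x
    simp only [mem_inter_iff, mem_Iic, mem_Ioo, mem_Ioc]
    exact ⟨fun h => ⟨h.2.1, h.1⟩, fun h => ⟨h.2, h.1, h.2.trans_lt hv.2⟩⟩
  rw [← integral_map (hmeas i).aemeasurable
    (measurable_one.indicator measurableSet_Iic).aestronglyMeasurable, hunif i,
    integral_indicator_one measurableSet_Iic, measureReal_restrict_apply measurableSet_Iic,
    hset, Real.volume_real_Ioc_of_le hv.1.le, sub_zero]

variable [IsProbabilityMeasure (ℙ : Measure Ω)] (hmeas : ∀ i, Measurable (U i))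
  (hindep : iIndepFun U ℙ) (hunif : ∀ i, Measure.map (U i) ℙ = volume.restrict (Ioo (0 : ℝ) 1))
include hmeas hindep hunif

theorem measureReal_add_le_empiricalCount_le {v : ℝ} (hv : v ∈ Ioo (0 : ℝ) 1) (n : ℕ) {d : ℝ}
    (hd : 0 ≤ d) :
    (ℙ).real {ω | n * v + d ≤ empiricalCount n (U · ω) v} ≤ exp (-2 * d ^ 2 / n) := by
  have h := measureReal_add_le_sum_range_le
    ((hindep.precomp (add_left_injective 1)).comp _
      fun _ => measurable_one.indicator measurableSet_Iic)
    (fun i => ((measurable_one.indicator measurableSet_Iic).comp (hmeas _)).aemeasurable)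
    (fun i => ae_of_all _ fun ω => by by_cases h : U (i + 1) ω ≤ v <;> simp [h])
    (fun i => integral_indicator_Iic_of_uniform hmeas hunif hv (i + 1)) n hd
  convert h using 4 with ω
  simp [empiricalCount, indicator_apply]

theorem measureReal_empiricalCount_le_sub_le {v : ℝ} (hv : v ∈ Ioo (0 : ℝ) 1) (n : ℕ) {d : ℝ}
    (hd : 0 ≤ d) :
    (ℙ).real {ω | empiricalCount n (U · ω) v ≤ n * v - d} ≤ exp (-2 * d ^ 2 / n) := by
  have h := measureReal_sum_range_le_sub_le
    ((hindep.precomp (add_left_injective 1)).comp _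
      fun _ => measurable_one.indicator measurableSet_Iic)
    (fun i => ((measurable_one.indicator measurableSet_Iic).comp (hmeas _)).aemeasurable)
    (fun i => ae_of_all _ fun ω => by by_cases h : U (i + 1) ω ≤ v <;> simp [h])
    (fun i => integral_indicator_Iic_of_uniform hmeas hunif hv (i + 1)) n hd
  convert h using 4 with ω
  simp [empiricalCount, indicator_apply]

theorem measureReal_lt_abs_orderStat_sub_le {n : ℕ} {α t : ℝ} (hnα : 1 ≤ n * α) (htα : t < α)
    (htα' : t < 1 - α) (hnt : 2 ≤ n * t) :
    (ℙ).real {ω | t < |orderStat n ⌊n * α⌋₊ (U · ω) - α|} ≤ 2 * exp (-(n * t ^ 2) / 2) := by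
  have hn : (0 : ℝ) < n := Nat.cast_pos.mpr (Nat.pos_of_ne_zero fun h => by norm_num [h] at hnt)
  have ht : 0 < t := pos_of_mul_pos_right (by linarith) hn.le
  set k := ⌊n * α⌋₊
  have hk1 : 1 ≤ k := Nat.le_floor (by exact_mod_cast hnα)
  have hkn : k ≤ n := Nat.floor_le_of_le (by nlinarith)
  have hk : (k : ℝ) ≤ n * α := Nat.floor_le (by linarith)
  have hk' : n * α - 1 < k := Nat.sub_one_lt_floor _
  have hsub : {ω | t < |orderStat n k (U · ω) - α|} ⊆
      {ω | empiricalCount n (U · ω) (α + t) ≤ n * (α + t) - n * t} ∪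
      {ω | n * (α - t) + (n * t - 1) ≤ empiricalCount n (U · ω) (α - t)} := by
    intro ω (hω : t < |_|)
    rcases lt_abs.mp hω with h | h
    · have hcount := (orderStat_le_iff hk1 hkn _ _).not.mp (by linarith : ¬ _ ≤ α + t)
      have : (empiricalCount n (U · ω) (α + t) : ℝ) + 1 ≤ k := by
        exact_mod_cast not_le.mp hcount
      exact Or.inl (by simp only [mem_ofPred_eq]; linarith)
    · have hcount := (orderStat_le_iff hk1 hkn _ _).mp (by linarith : _ ≤ α - t)
      have : (k : ℝ) ≤ empiricalCount n (U · ω) (α - t) := by exact_mod_cast hcount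
      exact Or.inr (by simp only [mem_ofPred_eq]; linarith)
  calc (ℙ).real {ω | t < |orderStat n k (U · ω) - α|}
      ≤ exp (-2 * (n * t) ^ 2 / n) + exp (-2 * (n * t - 1) ^ 2 / n) :=
        (measureReal_mono hsub).trans <| (measureReal_union_le _ _).trans <| add_le_add
          (measureReal_empiricalCount_le_sub_le hmeas hindep hunif ⟨by linarith, by linarith⟩ n
            (by positivity))
          (measureReal_add_le_empiricalCount_le hmeas hindep hunif ⟨by linarith, by linarith⟩ n
            (by linarith))
    _ ≤ exp (-(n * t ^ 2) / 2) + exp (-(n * t ^ 2) / 2) := by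
        refine add_le_add (exp_le_exp.mpr ?_) (exp_le_exp.mpr ?_) <;>
          rw [div_le_div_iff₀ hn two_pos]
        · nlinarith
        · nlinarith [mul_nonneg (sub_nonneg.mpr hnt) (by linarith : (0 : ℝ) ≤ 3 * (n * t) - 2)]
    _ = 2 * exp (-(n * t ^ 2) / 2) := by ring

theorem eventually_measureReal_le_exp_neg_mul_sq {ε : ℝ} (hε : 0 < ε) {α : ℝ}
    (hα : α ∈ Ioo (0 : ℝ) 1) {αn : ℕ → ℝ} {K : ℝ} (hK : 0 < K)
    (hαn : ∀ᶠ n : ℕ in atTop, |αn n - α| ≤ K * (n : ℝ) ^ (-(1 / (2 + ε))))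
    {C : ℝ} (hC : 0 < C) {a : ℕ → ℝ} (ha : ∀ᶠ n in atTop, a n ∈ Ioc 0 1) :
    ∀ᶠ n : ℕ in atTop,
      (ℙ).real {ω | C * a n ^ (-(1 / 2) : ℝ) * (n : ℝ) ^ (-(ε / (2 * (2 + ε)))) <
        √n * |αn n - α| * |orderStat n ⌊n * α⌋₊ (U · ω) - α| ^ ε} ≤
      2 * exp (-(((C / K) ^ ε⁻¹) ^ 2 / 2) * ((n : ℝ) ^ (ε / (2 * (2 + ε)))) ^ 2) := by
  set c₀ := (C / K) ^ ε⁻¹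
  have hc₀ : 0 < c₀ := by positivity
  set s : ℕ → ℝ := fun n => c₀ * (n : ℝ) ^ (-(1 / (2 + ε)))
  have hs : Tendsto s atTop (𝓝 0) := by
    rw [← mul_zero c₀]
    exact ((tendsto_rpow_neg_atTop (by positivity)).comp tendsto_natCast_atTop_atTop).const_mul c₀
  have hns : Tendsto (fun n : ℕ => n * s n) atTop atTop := by
    have hexp : 0 < 1 - 1 / (2 + ε) := by rw [sub_pos, div_lt_one (by positivity)]; linarith
    refine (((tendsto_rpow_atTop hexp).comp tendsto_natCast_atTop_atTop).const_mul_atTop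
      hc₀).congr' ?_
    filter_upwards [eventually_gt_atTop 0] with n hn
    rw [Function.comp_apply, sub_eq_add_neg, rpow_add (by exact_mod_cast hn), rpow_one]
    ring
  have hnα : Tendsto (fun n : ℕ => (n : ℝ) * α) atTop atTop :=
    tendsto_natCast_atTop_atTop.atTop_mul_const hα.1
  filter_upwards [hαn, ha, hs.eventually (gt_mem_nhds hα.1),
    hs.eventually (gt_mem_nhds (sub_pos.2 hα.2)), hns.eventually_ge_atTop 2,
    hnα.eventually_ge_atTop 1, eventually_gt_atTop 0] with n hαn ha hsα hsα' hns hnα hn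
  have hn' : (0 : ℝ) < n := by exact_mod_cast hn
  calc _ ≤ (ℙ).real {ω | s n < |orderStat n ⌊n * α⌋₊ (U · ω) - α|} :=
        measureReal_mono fun ω hω =>
          rpow_inv_mul_rpow_neg_lt_of_lt hε hn' hK hC ha hαn (abs_nonneg _) hω
    _ ≤ 2 * exp (-(n * s n ^ 2) / 2) :=
        measureReal_lt_abs_orderStat_sub_le hmeas hindep hunif hnα hsα hsα' hns
    _ = _ := by
        rw [← mul_rpow_neg_inv_two_add_sq hε hn'.le]
        simp only [s]
        congr 2
        ring

end UniformSample

/-- Large deviation bound for `√n |α_n - α| · |U_{k:n} - α|^ε`. -/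
theorem rate_times_uniform_order_statistic_negligible
    {Ω : Type*} [MeasureSpace Ω] [IsProbabilityMeasure (ℙ : Measure Ω)]
    -- i.i.d. uniform (0,1) random variables
    (U : ℕ → Ω → ℝ) (hmeas : ∀ i, Measurable (U i))
    (hindep : iIndepFun U ℙ)
    (hunif : ∀ i, Measure.map (U i) ℙ = volume.restrict (Ioo (0 : ℝ) 1))
    (ε : ℝ) (hε : ε ∈ Ioc (0 : ℝ) 1) (α : ℝ) (hα : α ∈ Ioo (0 : ℝ) 1)
    -- the sequence α_n with |α_n - α| = O(n^{-1/(2+ε)})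
    (αn : ℕ → ℝ)
    (hrate : (fun n : ℕ => |αn n - α|) =O[atTop] fun n : ℕ => (n : ℝ) ^ (-(1 / (2 + ε))))
    (C : ℝ) (hC : 0 < C)
    (a : ℕ → ℝ) (ha : Tendsto a atTop (nhds 0))
    (halow : ∀ n, a n ≥ 1 / Real.log (1 + n)) :
    (fun n : ℕ => (ℙ {ω |
        Real.sqrt n * |αn n - α| *
          |orderStat n ⌊(n : ℝ) * α⌋₊ (fun j => U j ω) - α| ^ ε >
        C * (a n) ^ (-(1 / 2) : ℝ) * (n : ℝ) ^ (-(ε / (2 * (2 + ε))))}).toReal) =o[atTop]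
      fun n : ℕ => 1 - Phi (a n * (n : ℝ) ^ (ε / (2 * (2 + ε)))) := by
  obtain ⟨K, hK, hKbound⟩ := hrate.exists_pos
  have hαn : ∀ᶠ n : ℕ in atTop, |αn n - α| ≤ K * (n : ℝ) ^ (-(1 / (2 + ε))) := by
    filter_upwards [hKbound.bound] with n hn
    simpa [abs_of_nonneg (rpow_nonneg (Nat.cast_nonneg n) _)] using hn
  have ha_mem : ∀ᶠ n in atTop, a n ∈ Ioc 0 1 := by
    filter_upwards [ha.eventually (eventually_le_nhds one_pos), eventually_gt_atTop 0]
      with n ha1 hn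
    exact ⟨(one_div_pos.mpr (log_pos (by norm_cast; omega))).trans_le (halow n), ha1⟩
  have hz : Tendsto (fun n : ℕ => (n : ℝ) ^ (ε / (2 * (2 + ε)))) atTop atTop :=
    (tendsto_rpow_atTop (by have := hε.1; positivity)).comp tendsto_natCast_atTop_atTop
  refine IsBigO.trans_isLittleO ?_
    ((isLittleO_exp_neg_mul_sq (δ := ((C / K) ^ ε⁻¹) ^ 2 / 2) (by positivity) ha hz).trans_isBigO
      (isBigO_exp_neg_sq_one_sub_Phi ?_))
  · refine IsBigO.of_bound 2 ?_
    filter_upwards [eventually_measureReal_le_exp_neg_mul_sq hmeas hindep hunif hε.1 hα hK hαn hC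
      ha_mem] with n hn
    rwa [norm_of_nonneg ENNReal.toReal_nonneg, norm_of_nonneg (exp_pos _).le]
  · filter_upwards [ha_mem] with n hn
    exact mul_nonneg hn.1.le (rpow_nonneg (Nat.cast_nonneg n) _)
end
end
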